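/- Let 𝐒 be a lifting matrix, 𝐒 = υ(S) or 𝐒 = λ(S) for some S ∈ R, let H ∈ SL(2,R), and set F := 𝐒·H. If H ∈ 𝔥, then F ∈ 𝔥 if and only if σ𝐒 = L·𝐒·L, which holds if and only if the lifting filter is whole-sample antisymmetric about 0, i.e., σS = −S; and in that case L·𝐒·L = 𝐒⁻¹. Symmetrically, if F ∈ 𝔥, then H ∈ 𝔥 if and only if σS = −S. -/

import Mathlib

open LaurentPolynomial Matrix

noncomputable section

/-- `R` = the ring `ℝ[z,z⁻¹]` of Laurent polynomials with real coefficients. -/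
abbrev R2 := LaurentPolynomial ℝ

/-- 2×2 matrices over `R`. -/
abbrev M2 := Matrix (Fin 2) (Fin 2) R2

/-- `SL(2,R)`. -/
abbrev SL2 := Matrix.SpecialLinearGroup (Fin 2) R2

/-- The ℝ-algebra involution `σ` determined by `σ(z) = z⁻¹`. -/
def σ : R2 ≃ₐ[ℝ] R2 := LaurentPolynomial.invert

/-- Entrywise application of `σ` to a matrix; plays the role of `H(z⁻¹)`. -/
def mσ (H : M2) : M2 := H.map fun f => σ f

/-- `Λ = diag(1, z⁻¹)`. -/
def Λm : M2 := Matrix.diagonal ![1, T (-1)]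

/-- `Λ⁻¹ = diag(1, z)`. -/
def Λim : M2 := Matrix.diagonal ![1, T 1]

/-- `L = diag(1, -1)`. -/
def Lm : M2 := Matrix.diagonal ![1, -1]

/-- `J = [[0,1],[1,0]]`. -/
def Jm : M2 := !![0, 1; 1, 0]

/-- Upper-triangular lifting matrix `υ(S) = [[1,S],[0,1]]`. -/
def umat (S : R2) : M2 := !![1, S; 0, 1]

/-- Lower-triangular lifting matrix `λ(S) = [[1,0],[S,1]]`. -/
def lmat (S : R2) : M2 := !![1, 0; S, 1]

/-- Unimodular gain-scaling matrix `D_K = diag(1/K, K)`. -/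
def DKm (K : ℝ) : M2 := Matrix.diagonal ![C K⁻¹, C K]

/-- Conjugation `γ_K(A) = D_K · A · D_K⁻¹`. -/
def γm (K : ℝ) (A : M2) : M2 := DKm K * A * (DKm K)⁻¹

/-- Substitution `z ↦ z²` on Laurent polynomials. -/
def sub2 : R2 →ₐ[ℝ] R2 :=
  AddMonoidAlgebra.mapDomainAlgHom ℝ ℝ
    (AddMonoidHom.mk' (fun n : ℤ => 2 * n) (by intro a b; ring))

/-- The scalar filter `H_i(z) = H_{i0}(z²) + z·H_{i1}(z²)` of row `i` of `H`. -/
def scal (H : M2) (i : Fin 2) : R2 := sub2 (H i 0) + T 1 * sub2 (H i 1)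

/-- Order of a (nonzero) Laurent polynomial: largest minus smallest exponent
with nonzero coefficient. -/
def lorder (f : R2) : ℤ := f.coeff.support.max.unbotD 0 - f.coeff.support.min.untopD 0

/-- Evaluation of a Laurent polynomial at a (nonzero) real number. -/
def lev (x : ℝ) (f : R2) : ℝ := f.coeff.sum fun n a => a * x ^ n

/-- Combined support (in the exponent variable) of all entries of a matrix. -/
def msupp (H : M2) : Finset ℤ :=
  Finset.univ.biUnion fun p : Fin 2 × Fin 2 => (H p.1 p.2).coeff.support

/-- Polyphase order of a (nonzero) matrix Laurent polynomial `H = Σ h(n) z⁻ⁿ`: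
`d - c` where `[c,d]` is the smallest interval with `h(c) ≠ 0 ≠ h(d)`. -/
def morder (H : M2) : ℤ := (msupp H).max.unbotD 0 - (msupp H).min.untopD 0

/-- The product `S_{N-1} ⋯ S_1 · S_0`. -/
def prodRev {M : Type*} [Monoid M] {N : ℕ} (SS : Fin N → M) : M :=
  ((List.ofFn SS).reverse).prod

/-- Partial products: `partialE SS B (n+1) = S_n ⋯ S_0 · B` and `partialE SS B 0 = B`. -/
def partialE {M : Type*} [Monoid M] {N : ℕ} (SS : Fin N → M) (B : M) : ℕ → M
  | 0 => B
  | n + 1 => (if h : n < N then SS ⟨n, h⟩ else 1) * partialE SS B n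

/-- `A` is an upper-triangular lifting matrix. -/
def IsUpper (A : M2) : Prop := ∃ S : R2, A = umat S

/-- `A` is a lower-triangular lifting matrix. -/
def IsLower (A : M2) : Prop := ∃ S : R2, A = lmat S

/-- Strict alternation of the predicates `up`/`lo` along a cascade: no two
consecutive factors are both upper-triangular or both lower-triangular. -/
def AlternatingP {α : Type*} (up lo : α → Prop) {N : ℕ} (SS : Fin N → α) : Prop :=
  ∀ (i : ℕ) (h : i + 1 < N),
    ¬(up (SS ⟨i, by omega⟩) ∧ up (SS ⟨i + 1, h⟩)) ∧
    ¬(lo (SS ⟨i, by omega⟩) ∧ lo (SS ⟨i + 1, h⟩))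

/-- Strict alternation of triangularity along a cascade of matrices. -/
def Alternating {N : ℕ} (SS : Fin N → M2) : Prop := AlternatingP IsUpper IsLower SS

/-- An irreducible cascade of lifting matrices: every factor is a lifting matrix,
no factor is the identity, and triangularity strictly alternates. -/
def IrrCascade {N : ℕ} (SS : Fin N → M2) : Prop :=
  (∀ i, (IsUpper (SS i) ∨ IsLower (SS i)) ∧ SS i ≠ 1) ∧ Alternating SS

/-- Membership in the unimodular HS class `𝔥`. -/
def memH (H : M2) : Prop := H.det = 1 ∧ mσ H = Lm * H * Jm

/-
The symmetry condition `σH = L·H·J` is multiplicative in the following sense: since `L² = 1`,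
`L·(𝐒·H)·J = (L·𝐒·L)·(L·H·J)`, while `σ(𝐒·H) = σ𝐒·σH`. So once one of `H`, `𝐒·H` lies in `𝔥`,
membership of the other is equivalent to `σ𝐒 = L·𝐒·L`, by cancelling an invertible factor.
For a lifting matrix, `σ` and conjugation by `L` act on the lifting filter as `S ↦ σS` and
`S ↦ -S`, and lifting matrices are injective in their filter, which gives `σS = -S`.
-/

lemma mσ_mul (A B : M2) : mσ (A * B) = mσ A * mσ B :=
  Matrix.map_mul

lemma Lm_mul_Lm : Lm * Lm = 1 := by
  simp [Lm, Matrix.diagonal_mul_diagonal, ← Matrix.diagonal_one]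

lemma Lm_mul_mul_Jm (A B : M2) : Lm * (A * B) * Jm = (Lm * A * Lm) * (Lm * B * Jm) := by
  simp only [Matrix.mul_assoc, ← Matrix.mul_assoc Lm Lm, Lm_mul_Lm, Matrix.one_mul]

lemma isUnit_Lm_mul_mul_Jm {H : M2} (hH : H.det = 1) : IsUnit (Lm * H * Jm) := by
  rw [Matrix.isUnit_iff_isUnit_det]
  simp [Lm, Jm, hH, Matrix.det_fin_two_of]

lemma memH_mul_iff {A H : M2} (hA : A.det = 1) (hH : memH H) :
    memH (A * H) ↔ mσ A = Lm * A * Lm := by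
  obtain ⟨hHdet, hHσ⟩ := hH
  have hdet : (A * H).det = 1 := by rw [Matrix.det_mul, hA, hHdet, one_mul]
  rw [memH, mσ_mul, hHσ, Lm_mul_mul_Jm, (isUnit_Lm_mul_mul_Jm hHdet).mul_left_inj]
  exact and_iff_right hdet

lemma memH_of_memH_mul {A H : M2} (hA : A.det = 1) (hF : memH (A * H))
    (hσA : mσ A = Lm * A * Lm) : memH H := by
  obtain ⟨hFdet, hFσ⟩ := hF
  have hHdet : H.det = 1 := by rwa [Matrix.det_mul, hA, one_mul] at hFdet
  have hconj : IsUnit (Lm * A * Lm) := by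
    rw [Matrix.isUnit_iff_isUnit_det]
    simp [Lm, hA]
  rw [mσ_mul, hσA, Lm_mul_mul_Jm, hconj.mul_right_inj] at hFσ
  exact ⟨hHdet, hFσ⟩

lemma mσ_umat (S : R2) : mσ (umat S) = umat (σ S) := by
  ext i j; fin_cases i <;> fin_cases j <;> simp [mσ, umat]

lemma mσ_lmat (S : R2) : mσ (lmat S) = lmat (σ S) := by
  ext i j; fin_cases i <;> fin_cases j <;> simp [mσ, lmat]

lemma Lm_mul_umat_mul_Lm (S : R2) : Lm * umat S * Lm = umat (-S) := by
  ext i j; fin_cases i <;> fin_cases j <;> simp [Lm, umat]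

lemma Lm_mul_lmat_mul_Lm (S : R2) : Lm * lmat S * Lm = lmat (-S) := by
  ext i j; fin_cases i <;> fin_cases j <;> simp [Lm, lmat]

lemma umat_injective : Function.Injective umat := fun a b h => by
  simpa [umat] using congrFun (congrFun h 0) 1

lemma lmat_injective : Function.Injective lmat := fun a b h => by
  simpa [lmat] using congrFun (congrFun h 1) 0

lemma det_umat (S : R2) : (umat S).det = 1 := by simp [umat, Matrix.det_fin_two_of]

lemma det_lmat (S : R2) : (lmat S).det = 1 := by simp [lmat, Matrix.det_fin_two_of]

lemma inv_umat (S : R2) : (umat S)⁻¹ = umat (-S) :=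
  Matrix.inv_eq_left_inv (by simp [umat, Matrix.one_fin_two])

lemma inv_lmat (S : R2) : (lmat S)⁻¹ = lmat (-S) :=
  Matrix.inv_eq_left_inv (by simp [lmat, Matrix.one_fin_two])

section Lifting

variable {S : R2} {SS : M2}

lemma det_lifting (hS : SS = umat S ∨ SS = lmat S) : SS.det = 1 := by
  rcases hS with rfl | rfl
  exacts [det_umat S, det_lmat S]

lemma Lm_mul_lifting_mul_Lm (hS : SS = umat S ∨ SS = lmat S) : Lm * SS * Lm = SS⁻¹ := by
  rcases hS with rfl | rfl
  · rw [Lm_mul_umat_mul_Lm, inv_umat]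
  · rw [Lm_mul_lmat_mul_Lm, inv_lmat]

lemma mσ_lifting_eq_iff (hS : SS = umat S ∨ SS = lmat S) :
    mσ SS = Lm * SS * Lm ↔ σ S = -S := by
  rcases hS with rfl | rfl
  · rw [mσ_umat, Lm_mul_umat_mul_Lm, umat_injective.eq_iff]
  · rw [mσ_lmat, Lm_mul_lmat_mul_Lm, lmat_injective.eq_iff]

end Lifting

theorem stmt5_general (H : M2) (S : R2) (SS : M2)
    (hS : SS = umat S ∨ SS = lmat S) :
    (memH H →
      ((memH (SS * H) ↔ mσ SS = Lm * SS * Lm) ∧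
       (memH (SS * H) ↔ σ S = -S) ∧
       (σ S = -S → Lm * SS * Lm = SS⁻¹))) ∧
    (memH (SS * H) → (memH H ↔ σ S = -S)) := by
  have hdet := det_lifting hS
  refine ⟨fun hH => ?_, fun hF => ?_⟩
  · have hF := memH_mul_iff hdet hH
    exact ⟨hF, hF.trans (mσ_lifting_eq_iff hS), fun _ => Lm_mul_lifting_mul_Lm hS⟩
  · exact ⟨fun hH => (mσ_lifting_eq_iff hS).mp ((memH_mul_iff hdet hH).mp hF),
      fun hσS => memH_of_memH_mul hdet hF ((mσ_lifting_eq_iff hS).mpr hσS)⟩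

/-- cf. Brislawn–Wohlberg, Lemma 10.  For a lifting matrix `𝐒`
and `H ∈ SL(2,R)`, set `F = 𝐒·H`.  If `H ∈ 𝔥` then `F ∈ 𝔥` iff `σ𝐒 = L·𝐒·L`,
iff the lifting filter is whole-sample antisymmetric (`σS = -S`); in that case
`L·𝐒·L = 𝐒⁻¹`.  Symmetrically, if `F ∈ 𝔥` then `H ∈ 𝔥` iff `σS = -S`. -/
theorem stmt5 (H : M2) (S : R2) (SS : M2) (hdet : H.det = 1)
    (hS : SS = umat S ∨ SS = lmat S) :
    (memH H →
      ((memH (SS * H) ↔ mσ SS = Lm * SS * Lm) ∧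
       (memH (SS * H) ↔ σ S = -S) ∧
       (σ S = -S → Lm * SS * Lm = SS⁻¹))) ∧
    (memH (SS * H) → (memH H ↔ σ S = -S)) :=
  stmt5_general H S SS hS
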